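/- Let r>0 and α, β, γ be real numbers. Let x and h be four times continuously differentiable real functions on [-r,r], both satisfying the boundary conditions x'(-r) = x'''(-r) = 0, x(r) = x''(r) = 0 and h'(-r) = h'''(-r) = 0, h(r) = h''(r) = 0. Then ∫_{-r}^{r} (β·x(s) - γ·x(s)^3)·h(s) ds - ∫_{-r}^{r} (α·x'(s) + (α/2)·x'(s)^3 + 3·x'(s)·x''(s)^2)·h'(s) ds + ∫_{-r}^{r} (x''(s) - 3·x'(s)^2·x''(s))·h''(s) ds = ∫_{-r}^{r} F(x)(s)·h(s) ds, where F(x) = x'''' + α·x'' + β·x - γ·x^3 - 3·(x'')^3 - 12·x'·x''·x''' - 3·(x')^2·(x'''' - (α/2)·x''). -/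

import Mathlib

/-!
With `G = α x' + (α/2) x'³ + 3 x' x''²` and `K = x'' - 3 x'² x''` the coefficients of `h'` and
`h''` in the first variation, the integrand `(β x - γ x³) h - G h' + K h'' - F(x) h` is the exact
derivative of `B = K h' - K' h - G h`, because `F(x) = β x - γ x³ + G' + K''`. The boundary
conditions make `B` vanish at both ends, so the identity is the fundamental theorem of calculus.
-/

open intervalIntegral

theorem ContDiff.hasDerivAt_iteratedDeriv {𝕜 F : Type*} [NontriviallyNormedField 𝕜]
    [NormedAddCommGroup F] [NormedSpace 𝕜 F] {f : 𝕜 → F} {n : WithTop ℕ∞} {k : ℕ}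
    (hf : ContDiff 𝕜 n f) (hk : (k : WithTop ℕ∞) < n) (t : 𝕜) :
    HasDerivAt (iteratedDeriv k f) (iteratedDeriv (k + 1) f t) t := by
  rw [iteratedDeriv_succ]
  exact ((hf.differentiable_iteratedDeriv k hk) t).hasDerivAt

noncomputable section

namespace WinklerRod

variable (α : ℝ) (x h : ℝ → ℝ)

def slopeCoeff (s : ℝ) : ℝ :=
  α * iteratedDeriv 1 x s + α / 2 * iteratedDeriv 1 x s ^ 3
    + 3 * iteratedDeriv 1 x s * iteratedDeriv 2 x s ^ 2

def curvatureCoeff (s : ℝ) : ℝ :=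
  iteratedDeriv 2 x s - 3 * iteratedDeriv 1 x s ^ 2 * iteratedDeriv 2 x s

def curvatureCoeffDeriv (s : ℝ) : ℝ :=
  iteratedDeriv 3 x s - 6 * iteratedDeriv 1 x s * iteratedDeriv 2 x s ^ 2
    - 3 * iteratedDeriv 1 x s ^ 2 * iteratedDeriv 3 x s

def variationalGradient (β γ : ℝ) (s : ℝ) : ℝ :=
  iteratedDeriv 4 x s + α * iteratedDeriv 2 x s + β * x s
    - γ * x s ^ 3 - 3 * iteratedDeriv 2 x s ^ 3
    - 12 * iteratedDeriv 1 x s * iteratedDeriv 2 x s * iteratedDeriv 3 x s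
    - 3 * iteratedDeriv 1 x s ^ 2 * (iteratedDeriv 4 x s - α / 2 * iteratedDeriv 2 x s)

def boundaryTerm (s : ℝ) : ℝ :=
  curvatureCoeff x s * iteratedDeriv 1 h s - curvatureCoeffDeriv x s * h s
    - slopeCoeff α x s * h s

variable {α x h}

theorem hasDerivAt_slopeCoeff (hx : ContDiff ℝ 3 x) (t : ℝ) :
    HasDerivAt (slopeCoeff α x)
      (α * iteratedDeriv 2 x t + 3 * α / 2 * iteratedDeriv 1 x t ^ 2 * iteratedDeriv 2 x t
        + 3 * iteratedDeriv 2 x t ^ 3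
        + 6 * iteratedDeriv 1 x t * iteratedDeriv 2 x t * iteratedDeriv 3 x t) t := by
  have d1 := hx.hasDerivAt_iteratedDeriv (k := 1) (by norm_num) t
  have d2 := hx.hasDerivAt_iteratedDeriv (k := 2) (by norm_num) t
  refine (((d1.const_mul α).add ((d1.pow 3).const_mul (α / 2))).add
    ((d1.const_mul 3).mul (d2.pow 2))).congr_deriv ?_
  simp only [Pi.pow_apply]
  ring

theorem hasDerivAt_curvatureCoeff (hx : ContDiff ℝ 3 x) (t : ℝ) :
    HasDerivAt (curvatureCoeff x) (curvatureCoeffDeriv x t) t := by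
  have d1 := hx.hasDerivAt_iteratedDeriv (k := 1) (by norm_num) t
  have d2 := hx.hasDerivAt_iteratedDeriv (k := 2) (by norm_num) t
  refine (d2.sub (((d1.pow 2).const_mul 3).mul d2)).congr_deriv ?_
  simp only [curvatureCoeffDeriv, Pi.pow_apply]
  ring

theorem hasDerivAt_curvatureCoeffDeriv (hx : ContDiff ℝ 4 x) (t : ℝ) :
    HasDerivAt (curvatureCoeffDeriv x)
      (iteratedDeriv 4 x t - 6 * iteratedDeriv 2 x t ^ 3
        - 18 * iteratedDeriv 1 x t * iteratedDeriv 2 x t * iteratedDeriv 3 x t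
        - 3 * iteratedDeriv 1 x t ^ 2 * iteratedDeriv 4 x t) t := by
  have d1 := hx.hasDerivAt_iteratedDeriv (k := 1) (by norm_num) t
  have d2 := hx.hasDerivAt_iteratedDeriv (k := 2) (by norm_num) t
  have d3 := hx.hasDerivAt_iteratedDeriv (k := 3) (by norm_num) t
  refine ((d3.sub ((d1.const_mul 6).mul (d2.pow 2))).sub
    (((d1.pow 2).const_mul 3).mul d3)).congr_deriv ?_
  simp only [Pi.pow_apply]
  ring

theorem hasDerivAt_boundaryTerm (β γ : ℝ) (hx : ContDiff ℝ 4 x) (hh : ContDiff ℝ 2 h)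
    (t : ℝ) :
    HasDerivAt (boundaryTerm α x h)
      ((β * x t - γ * x t ^ 3) * h t - slopeCoeff α x t * iteratedDeriv 1 h t
        + curvatureCoeff x t * iteratedDeriv 2 h t - variationalGradient α x β γ t * h t) t := by
  have dh0 : HasDerivAt h (iteratedDeriv 1 h t) t := by
    simpa using hh.hasDerivAt_iteratedDeriv (k := 0) (by norm_num) t
  have dh1 := hh.hasDerivAt_iteratedDeriv (k := 1) (by norm_num) t
  have dG := hasDerivAt_slopeCoeff (α := α) (hx.of_le (by norm_num)) t
  have dK := hasDerivAt_curvatureCoeff (hx.of_le (by norm_num)) t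
  have dK' := hasDerivAt_curvatureCoeffDeriv hx t
  refine (((dK.mul dh1).sub (dK'.mul dh0)).sub (dG.mul dh0)).congr_deriv ?_
  simp only [variationalGradient]
  ring

theorem boundaryTerm_eq_zero_of_odd {a : ℝ} (hx1 : iteratedDeriv 1 x a = 0)
    (hx3 : iteratedDeriv 3 x a = 0) (hh1 : iteratedDeriv 1 h a = 0) :
    boundaryTerm α x h a = 0 := by
  simp [boundaryTerm, curvatureCoeffDeriv, slopeCoeff, hx1, hx3, hh1]

theorem boundaryTerm_eq_zero_of_even {b : ℝ} (hx2 : iteratedDeriv 2 x b = 0) (hh0 : h b = 0) :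
    boundaryTerm α x h b = 0 := by
  simp [boundaryTerm, curvatureCoeff, hx2, hh0]

end WinklerRod

end

open WinklerRod

theorem stmt_6_general (r : ℝ) (α β γ : ℝ)
    (x h : ℝ → ℝ) (hx : ContDiff ℝ 4 x) (hh : ContDiff ℝ 4 h)
    (xbc1 : iteratedDeriv 1 x (-r) = 0) (xbc2 : iteratedDeriv 3 x (-r) = 0)
    (xbc4 : iteratedDeriv 2 x r = 0)
    (hbc1 : iteratedDeriv 1 h (-r) = 0)
    (hbc3 : h r = 0)
    (F : ℝ → ℝ)
    (hF : F = fun s =>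
      iteratedDeriv 4 x s + α * iteratedDeriv 2 x s + β * x s
        - γ * (x s) ^ 3 - 3 * (iteratedDeriv 2 x s) ^ 3
        - 12 * iteratedDeriv 1 x s * iteratedDeriv 2 x s * iteratedDeriv 3 x s
        - 3 * (iteratedDeriv 1 x s) ^ 2 *
            (iteratedDeriv 4 x s - (α / 2) * iteratedDeriv 2 x s)) :
    (∫ s in (-r)..r, (β * x s - γ * (x s) ^ 3) * h s)
      - (∫ s in (-r)..r,
          (α * iteratedDeriv 1 x s + (α / 2) * (iteratedDeriv 1 x s) ^ 3
            + 3 * iteratedDeriv 1 x s * (iteratedDeriv 2 x s) ^ 2) * iteratedDeriv 1 h s)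
      + (∫ s in (-r)..r,
          (iteratedDeriv 2 x s - 3 * (iteratedDeriv 1 x s) ^ 2 * iteratedDeriv 2 x s)
            * iteratedDeriv 2 h s)
    = ∫ s in (-r)..r, F s * h s := by
  have hB := hasDerivAt_boundaryTerm (α := α) β γ hx (hh.of_le (by norm_num))
  have cx1 := hx.continuous_iteratedDeriv 1 (by norm_num)
  have cx2 := hx.continuous_iteratedDeriv 2 (by norm_num)
  have cx3 := hx.continuous_iteratedDeriv 3 (by norm_num)
  have cx4 := hx.continuous_iteratedDeriv 4 (by norm_num)
  have ch1 := hh.continuous_iteratedDeriv 1 (by norm_num)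
  have ch2 := hh.continuous_iteratedDeriv 2 (by norm_num)
  have cx := hx.continuous
  have ch := hh.continuous
  subst hF
  rw [← sub_eq_zero, ← integral_sub, ← integral_add, ← integral_sub]
  · change ∫ t in (-r)..r, (_ - slopeCoeff α x t * _ + curvatureCoeff x t * _
      - variationalGradient α x β γ t * _) = 0
    rw [integral_eq_sub_of_hasDerivAt (fun t _ => hB t),
      boundaryTerm_eq_zero_of_even xbc4 hbc3, boundaryTerm_eq_zero_of_odd xbc1 xbc2 hbc1,
      sub_zero]
    simp only [slopeCoeff, curvatureCoeff, variationalGradient]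
    exact Continuous.intervalIntegrable (by fun_prop) _ _
  all_goals exact Continuous.intervalIntegrable (by fun_prop) _ _

/-- The integration-by-parts identity relating the derivative of the energy
functional to the variational gradient `F`. -/
theorem stmt_6 (r : ℝ) (hr : 0 < r) (α β γ : ℝ)
    (x h : ℝ → ℝ) (hx : ContDiff ℝ 4 x) (hh : ContDiff ℝ 4 h)
    (xbc1 : iteratedDeriv 1 x (-r) = 0) (xbc2 : iteratedDeriv 3 x (-r) = 0)
    (xbc3 : x r = 0) (xbc4 : iteratedDeriv 2 x r = 0)
    (hbc1 : iteratedDeriv 1 h (-r) = 0) (hbc2 : iteratedDeriv 3 h (-r) = 0)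
    (hbc3 : h r = 0) (hbc4 : iteratedDeriv 2 h r = 0)
    (F : ℝ → ℝ)
    (hF : F = fun s =>
      iteratedDeriv 4 x s + α * iteratedDeriv 2 x s + β * x s
        - γ * (x s) ^ 3 - 3 * (iteratedDeriv 2 x s) ^ 3
        - 12 * iteratedDeriv 1 x s * iteratedDeriv 2 x s * iteratedDeriv 3 x s
        - 3 * (iteratedDeriv 1 x s) ^ 2 *
            (iteratedDeriv 4 x s - (α / 2) * iteratedDeriv 2 x s)) :
    (∫ s in (-r)..r, (β * x s - γ * (x s) ^ 3) * h s)
      - (∫ s in (-r)..r,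
          (α * iteratedDeriv 1 x s + (α / 2) * (iteratedDeriv 1 x s) ^ 3
            + 3 * iteratedDeriv 1 x s * (iteratedDeriv 2 x s) ^ 2) * iteratedDeriv 1 h s)
      + (∫ s in (-r)..r,
          (iteratedDeriv 2 x s - 3 * (iteratedDeriv 1 x s) ^ 2 * iteratedDeriv 2 x s)
            * iteratedDeriv 2 h s)
    = ∫ s in (-r)..r, F s * h s :=
  stmt_6_general r α β γ x h hx hh xbc1 xbc2 xbc4 hbc1 hbc3 F hF
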